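/- The population average of the marginal contribution in the KL-divergence game equals an expected KL-divergence and is hence nonnegative: for every j ∈ Fin d and S ⊆ Fin d with j ∉ S, Σ_x P(x) · Δ_{v_KL}(S, j, x) = Σ_x P(x) · Σ_y p(y | x_{S∪{j}}) · log( p(y | x_{S∪{j}}) / p(y | x_S) ), and this common value is ≥ 0. -/

import Mathlib

/-!
Since `P(x) p(y | x) = p(x, y)`, the average of `v_KL(T, ·) - v_KL(S, ·)` for `S ⊆ T` is
`∑_{x,y} p(x, y) log (p(y | x_T) / p(y | x_S))`. The logarithm depends on `x` only through
`x_T`, so by the tower property `p(x, y)` may be replaced by `P(x) p(y | x_T)`; the inner sum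
over `y` is then the divergence of `p(· | x_T)` from `p(· | x_S)`, nonnegative by Gibbs'
inequality.
-/

open Finset Real

noncomputable section

/-- Conditional pmf `p(y | x_S)` in the finite discrete setting. -/
def condP {d : ℕ} {Xf : Fin d → Type*} {Y : Type*} [∀ j, Fintype (Xf j)] [Fintype Y]
    [∀ j, DecidableEq (Xf j)]
    (p : ((∀ j, Xf j) × Y) → ℝ) (S : Finset (Fin d)) (x : ∀ j, Xf j) (y : Y) : ℝ :=
  (∑ x' : ∀ j, Xf j, if ∀ j ∈ S, x' j = x j then p (x', y) else 0) /
  (∑ x' : ∀ j, Xf j, if ∀ j ∈ S, x' j = x j then ∑ y' : Y, p (x', y') else 0)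

/-- Marginal feature pmf `P(x)`. -/
def margP {d : ℕ} {Xf : Fin d → Type*} {Y : Type*} [Fintype Y]
    (p : ((∀ j, Xf j) × Y) → ℝ) (x : ∀ j, Xf j) : ℝ :=
  ∑ y : Y, p (x, y)

/-- Local conditional entropy `H(Y | x_S)`. -/
def entY {d : ℕ} {Xf : Fin d → Type*} {Y : Type*} [∀ j, Fintype (Xf j)] [Fintype Y]
    [∀ j, DecidableEq (Xf j)]
    (p : ((∀ j, Xf j) × Y) → ℝ) (S : Finset (Fin d)) (x : ∀ j, Xf j) : ℝ :=
  -∑ y : Y, condP p S x y * Real.log (condP p S x y)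

/-- The KL-divergence game `v_KL(S, x) = -D_KL(p(Y|x) ‖ p(Y|x_S))`. -/
def vKL {d : ℕ} {Xf : Fin d → Type*} {Y : Type*} [∀ j, Fintype (Xf j)] [Fintype Y]
    [∀ j, DecidableEq (Xf j)]
    (p : ((∀ j, Xf j) × Y) → ℝ) (S : Finset (Fin d)) (x : ∀ j, Xf j) : ℝ :=
  -∑ y : Y, condP p Finset.univ x y *
      Real.log (condP p Finset.univ x y / condP p S x y)

/-- The cross-entropy game `v_CE(S, x) = -H(p(Y|x), p(Y|x_S))`. -/
def vCE {d : ℕ} {Xf : Fin d → Type*} {Y : Type*} [∀ j, Fintype (Xf j)] [Fintype Y]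
    [∀ j, DecidableEq (Xf j)]
    (p : ((∀ j, Xf j) × Y) → ℝ) (S : Finset (Fin d)) (x : ∀ j, Xf j) : ℝ :=
  ∑ y : Y, condP p Finset.univ x y * Real.log (condP p S x y)

/-- The information-gain game `v_IG(S, x) = -H(Y | x_S)`. -/
def vIG {d : ℕ} {Xf : Fin d → Type*} {Y : Type*} [∀ j, Fintype (Xf j)] [Fintype Y]
    [∀ j, DecidableEq (Xf j)]
    (p : ((∀ j, Xf j) × Y) → ℝ) (S : Finset (Fin d)) (x : ∀ j, Xf j) : ℝ :=
  -entY p S x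

/-- The local entropy game `v_H(S, x) = H(Y | x_S)`. -/
def vH {d : ℕ} {Xf : Fin d → Type*} {Y : Type*} [∀ j, Fintype (Xf j)] [Fintype Y]
    [∀ j, DecidableEq (Xf j)]
    (p : ((∀ j, Xf j) × Y) → ℝ) (S : Finset (Fin d)) (x : ∀ j, Xf j) : ℝ :=
  entY p S x

/-- The marginalized entropy game
`v_{H*}(S, x) = E[H(Y | x') | x'_S = x_S] = ∑_{x' : x'_S = x_S} P(x' | x_S) H(Y|x')`. -/
def vHstar {d : ℕ} {Xf : Fin d → Type*} {Y : Type*} [∀ j, Fintype (Xf j)] [Fintype Y]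
    [∀ j, DecidableEq (Xf j)]
    (p : ((∀ j, Xf j) × Y) → ℝ) (S : Finset (Fin d)) (x : ∀ j, Xf j) : ℝ :=
  ∑ x' : ∀ j, Xf j,
    if ∀ j ∈ S, x' j = x j then
      (margP p x' /
          ∑ x'' : ∀ j, Xf j, if ∀ j ∈ S, x'' j = x j then margP p x'' else 0) *
        entY p Finset.univ x'
    else 0

/-- The Shapley value `φ_v(j, x)` of feature `j` at point `x` for the game `v`. -/
def shapley {d : ℕ} {X : Type*} (v : Finset (Fin d) → X → ℝ) (j : Fin d) (x : X) : ℝ :=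
  ∑ S ∈ (Finset.univ.erase j).powerset,
    ((S.card.factorial : ℝ) * ((d - S.card - 1).factorial : ℝ) / (d.factorial : ℝ)) *
      (v (insert j S) x - v S x)

section ClassSum

variable {α : Type*} [Fintype α] (r : α → α → Prop) [DecidableRel r]

def classSum (f : α → ℝ) (x : α) : ℝ :=
  ∑ x', if r x' x then f x' else 0

variable {r}

lemma classSum_congr (hr : Equivalence r) (f : α → ℝ) {x x' : α} (h : r x' x) :
    classSum r f x' = classSum r f x := by
  have hclass : ∀ z, r z x' ↔ r z x := fun z =>
    ⟨fun hz => hr.trans hz h, fun hz => hr.trans hz (hr.symm h)⟩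
  simp only [classSum, hclass]

lemma classSum_pos (hr : ∀ x, r x x) {f : α → ℝ} (hf : ∀ x, 0 ≤ f x) {x : α}
    (hfx : 0 < f x) : 0 < classSum r f x :=
  sum_pos' (fun x' _ => by split_ifs <;> simp [hf]) ⟨x, mem_univ x, by rwa [if_pos (hr x)]⟩

lemma classSum_mul_of_congr (f g : α → ℝ) (x : α)
    (hg : ∀ x', r x' x → g x' = g x) :
    classSum r (fun x' => f x' * g x') x = classSum r f x * g x := by
  rw [classSum, classSum, sum_mul]
  refine sum_congr rfl fun x' _ => ?_
  split_ifs with h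
  · rw [hg x' h]
  · rw [zero_mul]

lemma sum_mul_classSum_comm (hr : ∀ x y, r x y → r y x) (f g : α → ℝ) :
    ∑ x, g x * classSum r f x = ∑ x, f x * classSum r g x := by
  simp only [classSum, mul_sum, mul_ite, mul_zero]
  rw [sum_comm]
  exact sum_congr rfl fun x _ => sum_congr rfl fun x' _ => by
    by_cases h : r x' x
    · rw [if_pos h, if_pos (hr _ _ h), mul_comm]
    · rw [if_neg h, if_neg fun h' => h (hr _ _ h')]

/-- Tower property of conditional expectation given the class of `x`. -/
lemma sum_mul_classSum_div_mul (hr : Equivalence r) (w m L : α → ℝ)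
    (hm : ∀ x, classSum r m x ≠ 0) (hL : ∀ x x', r x' x → L x' = L x) :
    ∑ x, m x * (classSum r w x / classSum r m x) * L x = ∑ x, w x * L x := by
  set h : α → ℝ := fun x => L x / classSum r m x
  have hh : ∀ x x', r x' x → h x' = h x := fun x x' hx => by
    simp only [h, hL x x' hx, classSum_congr hr m hx]
  calc ∑ x, m x * (classSum r w x / classSum r m x) * L x
      = ∑ x, (m x * h x) * classSum r w x := sum_congr rfl fun x _ => by simp only [h]; ring
    _ = ∑ x, w x * classSum r (fun x' => m x' * h x') x :=
        sum_mul_classSum_comm (fun _ _ => hr.symm) w _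
    _ = ∑ x, w x * L x := sum_congr rfl fun x _ => by
        rw [classSum_mul_of_congr m h x (hh x), mul_div_cancel₀ _ (hm x)]

end ClassSum

lemma sum_mul_log_div_nonneg {ι : Type*} [Fintype ι] {q r : ι → ℝ} (hq : ∀ i, 0 < q i)
    (hr : ∀ i, 0 < r i) (hqr : ∑ i, q i = ∑ i, r i) :
    0 ≤ ∑ i, q i * log (q i / r i) := by
  have hgibbs : ∀ i, q i - r i ≤ q i * log (q i / r i) := fun i => by
    have h := mul_le_mul_of_nonneg_left
      (one_sub_inv_le_log_of_pos (div_pos (hq i) (hr i))) (hq i).le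
    rwa [inv_div, mul_sub, mul_one, mul_div_cancel₀ _ (hq i).ne'] at h
  calc (0 : ℝ) = ∑ i, (q i - r i) := by rw [sum_sub_distrib, hqr, sub_self]
    _ ≤ _ := sum_le_sum fun i _ => hgibbs i

section AgreeOn

variable {d : ℕ} {Xf : Fin d → Type*}

def AgreeOn (S : Finset (Fin d)) (x' x : ∀ j, Xf j) : Prop :=
  ∀ j ∈ S, x' j = x j

instance [∀ j, DecidableEq (Xf j)] (S : Finset (Fin d)) : DecidableRel (AgreeOn (Xf := Xf) S) :=
  fun x' x => inferInstanceAs (Decidable (∀ j ∈ S, x' j = x j))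

lemma agreeOn_equivalence (S : Finset (Fin d)) : Equivalence (AgreeOn (Xf := Xf) S) where
  refl _ _ _ := rfl
  symm h j hj := (h j hj).symm
  trans h h' j hj := (h j hj).trans (h' j hj)

lemma AgreeOn.mono {S T : Finset (Fin d)} (hST : S ⊆ T) {x' x : ∀ j, Xf j}
    (h : AgreeOn T x' x) : AgreeOn S x' x :=
  fun j hj => h j (hST hj)

lemma agreeOn_univ_iff {x' x : ∀ j, Xf j} : AgreeOn univ x' x ↔ x' = x :=
  ⟨fun h => funext fun j => h j (mem_univ j), fun h j _ => by rw [h]⟩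

end AgreeOn

section Conditioning

variable {d : ℕ} {Xf : Fin d → Type*} {Y : Type*} [Fintype Y] {p : ((∀ j, Xf j) × Y) → ℝ}

lemma margP_pos [Nonempty Y] (hpos : ∀ z, 0 < p z) (x : ∀ j, Xf j) : 0 < margP p x :=
  sum_pos (fun y _ => hpos (x, y)) univ_nonempty

variable [∀ j, Fintype (Xf j)] [∀ j, DecidableEq (Xf j)]

lemma condP_eq_classSum (S : Finset (Fin d)) (x : ∀ j, Xf j) (y : Y) :
    condP p S x y =
      classSum (AgreeOn S) (fun x' => p (x', y)) x / classSum (AgreeOn S) (margP p) x :=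
  rfl

lemma condP_congr (S : Finset (Fin d)) {x x' : ∀ j, Xf j} (h : AgreeOn S x' x) (y : Y) :
    condP p S x' y = condP p S x y := by
  simp only [condP_eq_classSum, classSum_congr (agreeOn_equivalence S) _ h]

variable [Nonempty Y] (hpos : ∀ z, 0 < p z)
include hpos

lemma classSum_margP_pos (S : Finset (Fin d)) (x : ∀ j, Xf j) :
    0 < classSum (AgreeOn S) (margP p) x :=
  classSum_pos (agreeOn_equivalence S).refl (fun x' => (margP_pos hpos x').le) (margP_pos hpos x)

lemma condP_pos (S : Finset (Fin d)) (x : ∀ j, Xf j) (y : Y) : 0 < condP p S x y :=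
  div_pos (classSum_pos (agreeOn_equivalence S).refl (fun x' => (hpos (x', y)).le) (hpos (x, y)))
    (classSum_margP_pos hpos S x)

lemma sum_condP (S : Finset (Fin d)) (x : ∀ j, Xf j) : ∑ y, condP p S x y = 1 := by
  have hnum : ∑ y, classSum (AgreeOn S) (fun x' => p (x', y)) x =
      classSum (AgreeOn S) (margP p) x := by
    simp only [classSum, margP]
    rw [sum_comm]
    exact sum_congr rfl fun x' _ => by split_ifs <;> simp
  simp only [condP_eq_classSum]
  rw [← sum_div, hnum, div_self (classSum_margP_pos hpos S x).ne']

lemma margP_mul_condP_univ (x : ∀ j, Xf j) (y : Y) :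
    margP p x * condP p univ x y = p (x, y) := by
  simp only [condP_eq_classSum, classSum, agreeOn_univ_iff, sum_ite_eq']
  simp [mul_div_cancel₀ _ (margP_pos hpos x).ne']

lemma sum_margP_mul_condP_mul (T : Finset (Fin d)) (y : Y) {L : (∀ j, Xf j) → ℝ}
    (hL : ∀ x x', AgreeOn T x' x → L x' = L x) :
    ∑ x, margP p x * condP p T x y * L x = ∑ x, p (x, y) * L x :=
  sum_mul_classSum_div_mul (agreeOn_equivalence T) _ _ L
    (fun x => (classSum_margP_pos hpos T x).ne') hL

lemma vKL_sub_vKL (S T : Finset (Fin d)) (x : ∀ j, Xf j) :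
    vKL p T x - vKL p S x =
      ∑ y, condP p univ x y * log (condP p T x y / condP p S x y) := by
  simp only [vKL, neg_sub_neg, ← sum_sub_distrib, ← mul_sub]
  refine sum_congr rfl fun y _ => ?_
  have hc := condP_pos hpos
  rw [log_div (hc _ x y).ne' (hc S x y).ne', log_div (hc _ x y).ne' (hc T x y).ne',
    log_div (hc T x y).ne' (hc S x y).ne']
  ring

lemma sum_margP_mul_vKL_sub {S T : Finset (Fin d)} (hST : S ⊆ T) :
    ∑ x, margP p x * (vKL p T x - vKL p S x) =
      ∑ x, margP p x * ∑ y, condP p T x y * log (condP p T x y / condP p S x y) := by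
  have hL : ∀ y x x', AgreeOn T x' x →
      log (condP p T x' y / condP p S x' y) = log (condP p T x y / condP p S x y) :=
    fun y x x' h => by rw [condP_congr T h, condP_congr S (h.mono hST)]
  calc ∑ x, margP p x * (vKL p T x - vKL p S x)
      = ∑ y, ∑ x, p (x, y) * log (condP p T x y / condP p S x y) := by
        simp only [vKL_sub_vKL hpos, mul_sum, ← mul_assoc, margP_mul_condP_univ hpos]
        exact sum_comm
    _ = ∑ y, ∑ x, margP p x * condP p T x y * log (condP p T x y / condP p S x y) :=
        sum_congr rfl fun y _ => (sum_margP_mul_condP_mul hpos T y (hL y)).symm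
    _ = _ := by
        simp only [mul_sum, mul_assoc]
        exact sum_comm

end Conditioning

theorem avg_kl_marginal_contribution_general {d : ℕ} {Xf : Fin d → Type*} {Y : Type*}
    [∀ j, Fintype (Xf j)] [∀ j, DecidableEq (Xf j)]
    [Fintype Y] [Nonempty Y]
    (p : ((∀ j, Xf j) × Y) → ℝ)
    (hpos : ∀ z : ((∀ j, Xf j) × Y), 0 < p z)
    (j : Fin d) (S : Finset (Fin d)) :
    (∑ x : ∀ j, Xf j,
        margP p x * (vKL p (insert j S) x - vKL p S x) =
      ∑ x : ∀ j, Xf j,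
        margP p x *
          ∑ y : Y, condP p (insert j S) x y *
            Real.log (condP p (insert j S) x y / condP p S x y)) ∧
    0 ≤ ∑ x : ∀ j, Xf j,
        margP p x * (vKL p (insert j S) x - vKL p S x) := by
  have heq := sum_margP_mul_vKL_sub hpos (subset_insert j S)
  refine ⟨heq, heq ▸ sum_nonneg fun x _ => mul_nonneg (margP_pos hpos x).le ?_⟩
  exact sum_mul_log_div_nonneg (condP_pos hpos _ x) (condP_pos hpos S x)
    ((sum_condP hpos _ x).trans (sum_condP hpos S x).symm)

/-- the population average of the KL-game marginal contribution equals an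
expected KL-divergence and is nonnegative. -/
theorem avg_kl_marginal_contribution {d : ℕ} (hd : 1 ≤ d) {Xf : Fin d → Type*} {Y : Type*}
    [∀ j, Fintype (Xf j)] [∀ j, Nonempty (Xf j)] [∀ j, DecidableEq (Xf j)]
    [Fintype Y] [Nonempty Y]
    (p : ((∀ j, Xf j) × Y) → ℝ)
    (hpos : ∀ z : ((∀ j, Xf j) × Y), 0 < p z)
    (hsum : ∑ z : ((∀ j, Xf j) × Y), p z = 1)
    (j : Fin d) (S : Finset (Fin d)) (hjS : j ∉ S) :
    (∑ x : ∀ j, Xf j,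
        margP p x * (vKL p (insert j S) x - vKL p S x) =
      ∑ x : ∀ j, Xf j,
        margP p x *
          ∑ y : Y, condP p (insert j S) x y *
            Real.log (condP p (insert j S) x y / condP p S x y)) ∧
    0 ≤ ∑ x : ∀ j, Xf j,
        margP p x * (vKL p (insert j S) x - vKL p S x) :=
  avg_kl_marginal_contribution_general p hpos j S
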